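/- arXiv:2211.01248 — 2 statements merged into one kernel-verified Lean document; each statement's English description precedes it below -/
import Mathlib

section
/- Equivalence for the full Krawtchouk LP with partial objective (Lemma 4.1): assume ℓ ≥ n. Let p be a function from the subspaces of F^n to ℝ and define a : (F^n)^ℓ → ℝ by a(x) := ∑_{T : Span(x) ≤ T} p(T). Then a is feasible for the unsymmetrized Krawtchouk LP at level ℓ if and only if p is feasible for the distance-constrained pseudoprobability program at level ℓ; moreover the partial objective satisfies ∑_{x₁ ∈ F^n} a(x₁, 0, …, 0) = ∑_S |S| · p(S). -/
open Classical

noncomputable section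

/-- `χ_α(x) := ψ(∑_j ⟨α_j, x_j⟩)`. -/
def chi {n ℓ : ℕ} {F : Type} [Field F] [Fintype F] (ψ : AddChar F ℂ)
    (α x : Fin ℓ → Fin n → F) : ℂ :=
  ψ (∑ j, ∑ i, α j i * x j i)

/-- Feasibility for the unsymmetrized Krawtchouk LP at level `ℓ`. -/
def KrawFeasible (n ℓ d : ℕ) (F : Type) [Field F] [Fintype F]
    (ψ : AddChar F ℂ) (a : (Fin ℓ → Fin n → F) → ℝ) : Prop :=
  a 0 = 1 ∧
  (∀ x : Fin ℓ → Fin n → F,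
      (∃ w ∈ Submodule.span F (Set.range x), w ≠ 0 ∧ hammingNorm w ≤ d - 1) → a x = 0) ∧
  (∀ α : Fin ℓ → Fin n → F, ∃ c : ℝ, 0 ≤ c ∧
      (∑ x : Fin ℓ → Fin n → F, (a x : ℂ) * chi ψ α x) = (c : ℂ)) ∧
  (∀ x : Fin ℓ → Fin n → F, 0 ≤ a x)

/-- Feasibility for the distance-constrained pseudoprobability program at level `ℓ`. -/
def PseudoFeasibleDist (n ℓ d : ℕ) (F : Type) [Field F] [Fintype F]
    (p : Submodule F (Fin n → F) → ℝ) : Prop :=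
  (∑ S : Submodule F (Fin n → F), p S) = 1 ∧
  (∀ S : Submodule F (Fin n → F), (∃ w ∈ S, w ≠ 0 ∧ hammingNorm w ≤ d - 1) → p S = 0) ∧
  (∀ U : Submodule F (Fin n → F),
      0 ≤ ∑ S : Submodule F (Fin n → F),
        if S ≤ U then (Fintype.card S : ℝ) ^ ℓ * p S else 0) ∧
  (∀ U : Submodule F (Fin n → F),
      0 ≤ ∑ S : Submodule F (Fin n → F), if U ≤ S then p S else 0)

/-! Writing `a x = upperSum p (Span x)`, every constraint on `a` becomes one on the upper sums of
`p`, and since `n ≤ ℓ` every subspace is some `Span x`. Nonnegativity then transfers verbatim, and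
vanishing transfers by Möbius inversion on the finite subspace lattice, because the subspaces
containing a light nonzero word form an up-closed family. Orthogonality of characters gives
`∑ₓ a(x) χ_α(x) = ∑_{T ≤ Span(α)^⊥} |T|^ℓ p(T)`, and every subspace is some `Span(α)^⊥`, so the
Fourier constraints are the downward ones. For the objective, `Span(x₁, 0, …, 0) = F ∙ x₁`, and
exactly `|S|` vectors `x₁` satisfy `F ∙ x₁ ≤ S`. -/

def upperSum {α M : Type*} [Fintype α] [Preorder α] [AddCommMonoid M]
    (f : α → M) (a : α) : M :=
  ∑ b, if a ≤ b then f b else 0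

section UpperSum

variable {α M : Type*} [Fintype α] [PartialOrder α] [AddCommMonoid M]

lemma upperSum_eq_add_sum_lt (f : α → M) (a : α) :
    upperSum f a = f a + ∑ b, if a < b then f b else 0 := by
  rw [upperSum, ← Fintype.sum_ite_eq' a f, ← Finset.sum_add_distrib]
  refine Finset.sum_congr rfl fun b _ => ?_
  rcases eq_or_ne b a with rfl | hba
  · simp
  · simp [hba, lt_iff_le_and_ne, hba.symm]

lemma upperSum_eq_zero_iff_of_isUpperSet {s : Set α} (hs : IsUpperSet s) (f : α → M) :
    (∀ a ∈ s, upperSum f a = 0) ↔ ∀ a ∈ s, f a = 0 := by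
  refine ⟨fun h a => ?_, fun h a ha => Finset.sum_eq_zero fun b _ => ?_⟩
  · induction a using WellFoundedGT.induction with
    | _ a ih =>
      intro ha
      have hlt : (∑ b, if a < b then f b else 0) = 0 :=
        Finset.sum_eq_zero fun b _ => ite_eq_right_iff.2 fun hab => ih b hab (hs hab.le ha)
      simpa [upperSum_eq_add_sum_lt, hlt] using h a ha
  · exact ite_eq_right_iff.2 fun hab => h b (hs hab ha)

lemma upperSum_bot [OrderBot α] (f : α → M) : upperSum f ⊥ = ∑ a, f a := by
  simp [upperSum]

end UpperSum

section Subspaces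

variable {K V : Type*} [Field K] [AddCommGroup V] [Module K V]

lemma sum_upperSum_span_singleton [Fintype V] (p : Submodule K V → ℝ) :
    ∑ v : V, upperSum p (K ∙ v) = ∑ S : Submodule K V, (Fintype.card S : ℝ) * p S := by
  simp only [upperSum, Submodule.span_singleton_le_iff_mem]
  rw [Finset.sum_comm]
  refine Finset.sum_congr rfl fun S _ => ?_
  rw [← Finset.sum_filter, Finset.sum_const, nsmul_eq_mul, Fintype.card_subtype]

lemma span_range_ite_eq_span_singleton {ι : Type*} {P : ι → Prop} [DecidablePred P]
    (hP : ∃ i, P i) (v : V) :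
    Submodule.span K (Set.range fun i => if P i then v else 0) = K ∙ v := by
  obtain ⟨i, hi⟩ := hP
  refine le_antisymm (Submodule.span_le.2 <| Set.range_subset_iff.2 fun j => ?_) ?_
  · split_ifs
    · exact Submodule.mem_span_singleton_self v
    · exact Submodule.zero_mem _
  · exact (Submodule.span_singleton_le_iff_mem _ _).2 (Submodule.subset_span ⟨i, if_pos hi⟩)

lemma surjective_span_range [FiniteDimensional K V] {ℓ : ℕ} (h : Module.finrank K V ≤ ℓ) :
    Function.Surjective fun x : Fin ℓ → V => Submodule.span K (Set.range x) := by
  intro U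
  set b := Module.finBasis K U
  have hm : Module.finrank K U ≤ ℓ := (Submodule.finrank_le U).trans h
  refine ⟨fun j => if hj : (j : ℕ) < Module.finrank K U then b ⟨j, hj⟩ else 0,
    le_antisymm ?_ ?_⟩
  · rw [Submodule.span_le]
    rintro _ ⟨j, rfl⟩
    dsimp only
    split_ifs
    · exact (b _).2
    · exact U.zero_mem
  · have hU : Submodule.span K (U.subtype '' Set.range b) = U := by
      rw [Submodule.span_image, b.span_eq, Submodule.map_top, Submodule.range_subtype]
    conv_lhs => rw [← hU]
    refine Submodule.span_mono ?_
    rintro _ ⟨_, ⟨i, rfl⟩, rfl⟩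
    exact ⟨⟨i, i.2.trans_le hm⟩, by simp⟩

lemma forall_span_range_iff [FiniteDimensional K V] {ℓ : ℕ} (h : Module.finrank K V ≤ ℓ)
    {P : Submodule K V → Prop} :
    (∀ x : Fin ℓ → V, P (Submodule.span K (Set.range x))) ↔ ∀ U, P U :=
  (surjective_span_range h).forall.symm

lemma span_range_zero {ι : Type*} : Submodule.span K (Set.range (0 : ι → V)) = ⊥ :=
  Submodule.span_eq_bot.2 <| by rintro _ ⟨i, rfl⟩; rfl

end Subspaces

open Matrix

lemma LinearMap.BilinForm.le_orthogonal_span_range_iff {R M ι : Type*} [CommRing R]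
    [AddCommGroup M] [Module R M]
    (B : LinearMap.BilinForm R M) (α : ι → M) (T : Submodule R M) :
    T ≤ B.orthogonal (Submodule.span R (Set.range α)) ↔ ∀ j, ∀ v ∈ T, B (α j) v = 0 := by
  refine ⟨fun h j v hv => h hv _ (Submodule.subset_span ⟨j, rfl⟩), fun h v hv u hu => ?_⟩
  have hker : Submodule.span R (Set.range α) ≤ LinearMap.ker (B.flip v) :=
    Submodule.span_le.2 <| Set.range_subset_iff.2 fun j => h j v hv
  exact hker hu

section DotProduct

variable {K m : Type*} [Field K] [Fintype m]

lemma dotProductBilin_isRefl :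
    LinearMap.BilinForm.IsRefl (dotProductBilin K K : LinearMap.BilinForm K (m → K)) :=
  fun v w h => by simpa [dotProduct_comm] using h

lemma dotProductBilin_nondegenerate :
    LinearMap.BilinForm.Nondegenerate (dotProductBilin K K : LinearMap.BilinForm K (m → K)) :=
  (LinearMap.IsRefl.nondegenerate_iff_separatingLeft (dotProductBilin_isRefl (K := K) (m := m))).2
    fun v hv => dotProduct_eq_zero v (by simpa using hv)

def spanOrthogonal {ι : Type*} (α : ι → m → K) : Submodule K (m → K) :=
  LinearMap.BilinForm.orthogonal (dotProductBilin K K) (Submodule.span K (Set.range α))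

lemma le_spanOrthogonal_iff {ι : Type*} (α : ι → m → K) (T : Submodule K (m → K)) :
    T ≤ spanOrthogonal α ↔ ∀ j, ∀ v ∈ T, α j ⬝ᵥ v = 0 :=
  LinearMap.BilinForm.le_orthogonal_span_range_iff _ α T

lemma surjective_spanOrthogonal {ℓ : ℕ} (h : Fintype.card m ≤ ℓ) :
    Function.Surjective (spanOrthogonal : (Fin ℓ → m → K) → Submodule K (m → K)) := by
  intro U
  have hdim : Module.finrank K (m → K) ≤ ℓ := by rwa [Module.finrank_fintype_fun_eq_card]
  obtain ⟨α, hα⟩ :=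
    surjective_span_range hdim (LinearMap.BilinForm.orthogonal (dotProductBilin K K) U)
  refine ⟨α, ?_⟩
  dsimp only at hα
  rw [spanOrthogonal, hα,
    LinearMap.BilinForm.orthogonal_orthogonal dotProductBilin_nondegenerate dotProductBilin_isRefl]

end DotProduct

lemma AddChar.map_sum_eq_prod {ι A M : Type*} [AddCommMonoid A] [CommMonoid M] (ψ : AddChar A M)
    (s : Finset ι) (f : ι → A) : ψ (∑ i ∈ s, f i) = ∏ i ∈ s, ψ (f i) := by
  induction s using Finset.cons_induction with
  | empty => simp
  | cons i s hi ih => rw [Finset.sum_cons, Finset.prod_cons, AddChar.map_add_eq_mul, ih]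

lemma AddChar.sum_apply_linearMap {K V R : Type*} [Field K] [AddCommGroup V] [Module K V]
    [Fintype V] [CommRing R] [IsDomain R] {ψ : AddChar K R} (hψ : ψ ≠ 1) (f : V →ₗ[K] K) :
    ∑ v, ψ (f v) = if f = 0 then (Fintype.card V : R) else 0 := by
  have hcomp : ψ.compAddMonoidHom f.toAddMonoidHom = 0 ↔ f = 0 := by
    refine ⟨fun h => ?_, fun h => by ext v; simp [h]⟩
    by_contra hf
    obtain ⟨c, hc⟩ := AddChar.ne_one_iff.1 hψ
    obtain ⟨v, rfl⟩ := LinearMap.surjective hf c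
    exact hc (by simpa using DFunLike.congr_fun h v)
  simpa only [hcomp, AddChar.compAddMonoidHom_apply, LinearMap.toAddMonoidHom_coe] using
    AddChar.sum_eq_ite (ψ.compAddMonoidHom f.toAddMonoidHom)

section Fourier

variable {n ℓ : ℕ} {F : Type} [Field F] [Fintype F] {ψ : AddChar F ℂ}

lemma sum_chi_pi_submodule (hψ : ψ ≠ 1) (α : Fin ℓ → Fin n → F)
    (T : Submodule F (Fin n → F)) :
    ∑ x : Fin ℓ → T, chi ψ α (fun j => x j) =
      if T ≤ spanOrthogonal α then (Fintype.card T : ℂ) ^ ℓ else 0 := by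
  let f (j : Fin ℓ) : T →ₗ[F] F := (dotProductBilin F F (α j)).domRestrict T
  have hf : (∀ j, f j = 0) ↔ T ≤ spanOrthogonal α := by
    simp only [le_spanOrthogonal_iff, LinearMap.ext_iff, Subtype.forall]
    rfl
  calc ∑ x : Fin ℓ → T, chi ψ α (fun j => x j)
      = ∑ x : Fin ℓ → T, ∏ j, ψ (f j (x j)) := by
        refine Finset.sum_congr rfl fun x _ => ?_
        rw [chi, AddChar.map_sum_eq_prod]
        rfl
    _ = ∏ j, ∑ v, ψ (f j v) := (Fintype.prod_sum fun j v => ψ (f j v)).symm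
    _ = _ := by
        simp only [AddChar.sum_apply_linearMap hψ, Finset.prod_ite_zero, Finset.prod_const,
          Finset.card_univ, Fintype.card_fin, Finset.mem_univ, forall_const, hf]

lemma sum_upperSum_mul_chi_eq_sum_pi (p : Submodule F (Fin n → F) → ℝ) (α : Fin ℓ → Fin n → F) :
    ∑ x : Fin ℓ → Fin n → F,
        ((upperSum p (Submodule.span F (Set.range x)) : ℝ) : ℂ) * chi ψ α x =
      ∑ T, (p T : ℂ) * ∑ x : Fin ℓ → T, chi ψ α (fun j => x j) := by
  simp only [upperSum, Complex.ofReal_sum, Finset.sum_mul]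
  rw [Finset.sum_comm]
  refine Finset.sum_congr rfl fun T _ => ?_
  simp only [Submodule.span_le, Set.range_subset_iff, apply_ite, ite_mul, Complex.ofReal_zero,
    zero_mul]
  rw [← Finset.sum_filter, ← Finset.mul_sum,
    Finset.sum_subtype _ (p := fun x : Fin ℓ → Fin n → F => ∀ j, x j ∈ T) (by simp)]
  exact congrArg _ (Fintype.sum_equiv Equiv.subtypePiEquivPi _ _ fun _ => rfl)

lemma sum_upperSum_mul_chi (hψ : ψ ≠ 1) (p : Submodule F (Fin n → F) → ℝ)
    (α : Fin ℓ → Fin n → F) :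
    ∑ x : Fin ℓ → Fin n → F,
        ((upperSum p (Submodule.span F (Set.range x)) : ℝ) : ℂ) * chi ψ α x =
      ((∑ T : Submodule F (Fin n → F),
        if T ≤ spanOrthogonal α then (Fintype.card T : ℝ) ^ ℓ * p T else 0 : ℝ) : ℂ) := by
  simp only [sum_upperSum_mul_chi_eq_sum_pi, sum_chi_pi_submodule hψ, Complex.ofReal_sum]
  refine Finset.sum_congr rfl fun T _ => ?_
  split_ifs <;> push_cast <;> ring

end Fourier

section Feasibility

variable {n ℓ : ℕ} {F : Type} [Field F] [Fintype F] (p : Submodule F (Fin n → F) → ℝ)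

lemma forall_upperSum_span_range_eq_zero_iff (hnl : n ≤ ℓ) {s : Set (Submodule F (Fin n → F))}
    (hs : IsUpperSet s) :
    (∀ x : Fin ℓ → Fin n → F, Submodule.span F (Set.range x) ∈ s →
      upperSum p (Submodule.span F (Set.range x)) = 0) ↔ ∀ S ∈ s, p S = 0 := by
  rw [← upperSum_eq_zero_iff_of_isUpperSet hs]
  exact forall_span_range_iff (P := fun U => U ∈ s → upperSum p U = 0) (by simpa using hnl)

lemma forall_exists_nonneg_sum_chi_iff {ψ : AddChar F ℂ} (hψ : ψ ≠ 1) (hnl : n ≤ ℓ) :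
    (∀ α : Fin ℓ → Fin n → F, ∃ c : ℝ, 0 ≤ c ∧
      ∑ x, ((upperSum p (Submodule.span F (Set.range x)) : ℝ) : ℂ) * chi ψ α x = c) ↔
    ∀ U, 0 ≤ ∑ S : Submodule F (Fin n → F),
      if S ≤ U then (Fintype.card S : ℝ) ^ ℓ * p S else 0 := by
  simp only [sum_upperSum_mul_chi hψ, Complex.ofReal_inj, exists_eq_right']
  refine ⟨fun h U => ?_, fun h α => h _⟩
  obtain ⟨α, rfl⟩ := surjective_spanOrthogonal (K := F) (m := Fin n) (by simpa using hnl) U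
  exact h α

end Feasibility

theorem full_kraw_partial_objective_equivalence_general
    (n ℓ d : ℕ) (hn : 1 ≤ n) (hnl : n ≤ ℓ)
    (F : Type) [Field F] [Fintype F]
    (ψ : AddChar F ℂ) (hψ : ψ ≠ 1)
    (p : Submodule F (Fin n → F) → ℝ)
    (a : (Fin ℓ → Fin n → F) → ℝ)
    (ha : ∀ x : Fin ℓ → Fin n → F,
      a x = ∑ T : Submodule F (Fin n → F),
        if Submodule.span F (Set.range x) ≤ T then p T else 0) :
    (KrawFeasible n ℓ d F ψ a ↔ PseudoFeasibleDist n ℓ d F p) ∧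
    (∑ x₁ : Fin n → F, a (fun j : Fin ℓ => if j.val = 0 then x₁ else 0))
      = ∑ S : Submodule F (Fin n → F), (Fintype.card S : ℝ) * p S := by
  obtain rfl : a = fun x => upperSum p (Submodule.span F (Set.range x)) := funext ha
  have hbad :
      IsUpperSet {S : Submodule F (Fin n → F) | ∃ w ∈ S, w ≠ 0 ∧ hammingNorm w ≤ d - 1} :=
    fun S T hST ⟨w, hwS, hw⟩ => ⟨w, hST hwS, hw⟩
  refine ⟨and_congr (by simp only [span_range_zero, upperSum_bot]) <|
    and_congr (forall_upperSum_span_range_eq_zero_iff p hnl hbad) <|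
    and_congr (forall_exists_nonneg_sum_chi_iff p hψ hnl) <|
    forall_span_range_iff (P := fun U => 0 ≤ upperSum p U) (by simpa using hnl), ?_⟩
  have hℓ : ∃ j : Fin ℓ, j.val = 0 := ⟨⟨0, hn.trans hnl⟩, rfl⟩
  simp only [span_range_ite_eq_span_singleton hℓ]
  exact sum_upperSum_span_singleton p

/-- **Equivalence for the full Krawtchouk LP with partial objective (Lemma 4.1).**
For `ℓ ≥ n`, with `a x := ∑_{T ≥ Span x} p T`, `a` is feasible for the
unsymmetrized Krawtchouk LP iff `p` is feasible for the distance-constrained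
pseudoprobability program, and the partial objective satisfies
`∑_{x₁ ∈ F^n} a (x₁, 0, …, 0) = ∑_S |S| p S`. -/
theorem full_kraw_partial_objective_equivalence
    (n ℓ d : ℕ) (hn : 1 ≤ n) (hd : 1 ≤ d) (hdn : d ≤ n) (hnl : n ≤ ℓ)
    (F : Type) [Field F] [Fintype F]
    (ψ : AddChar F ℂ) (hψ : ψ ≠ 1)
    (p : Submodule F (Fin n → F) → ℝ)
    (a : (Fin ℓ → Fin n → F) → ℝ)
    (ha : ∀ x : Fin ℓ → Fin n → F,
      a x = ∑ T : Submodule F (Fin n → F),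
        if Submodule.span F (Set.range x) ≤ T then p T else 0) :
    (KrawFeasible n ℓ d F ψ a ↔ PseudoFeasibleDist n ℓ d F p) ∧
    (∑ x₁ : Fin n → F, a (fun j : Fin ℓ => if j.val = 0 then x₁ else 0))
      = ∑ S : Submodule F (Fin n → F), (Fintype.card S : ℝ) * p S :=
  full_kraw_partial_objective_equivalence_general n ℓ d hn hnl F ψ hψ p a ha
end
end

section
/- Structure of optima for the partial Krawtchouk objective (Theorem 4.4, structure of optima): assume ℓ ≥ n. If p is feasible for the dimension-constrained pseudoprobability program at level ℓ and maximizes the objective ∑_S |S| · p(S) among all feasible solutions, then p(S) ≥ 0 for every subspace S, ∑_S p(S) = 1, and p(S) = 0 for every subspace S with dim S ≠ k₀. -/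
open Classical

noncomputable section

/-- A subspace `C ≤ F^n` has minimum distance at least `d` if every nonzero
codeword has Hamming weight at least `d`. -/
def MinDistGe (n d : ℕ) (F : Type) [Field F] [Fintype F]
    (C : Submodule F (Fin n → F)) : Prop :=
  ∀ w ∈ C, w ≠ 0 → d ≤ hammingNorm w

/-- `k₀`: the maximum dimension of a subspace of `F^n` of minimum distance at
least `d`. -/
def kzero (n d : ℕ) (F : Type) [Field F] [Fintype F] : ℕ :=
  sSup {k : ℕ | ∃ C : Submodule F (Fin n → F), MinDistGe n d F C ∧ Module.finrank F C = k}

/-- Feasibility for the dimension-constrained pseudoprobability program at level `ℓ`. -/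
def PseudoFeasibleDim (n ℓ d : ℕ) (F : Type) [Field F] [Fintype F]
    (p : Submodule F (Fin n → F) → ℝ) : Prop :=
  (∑ S : Submodule F (Fin n → F), p S) = 1 ∧
  (∀ S : Submodule F (Fin n → F), kzero n d F < Module.finrank F S → p S = 0) ∧
  (∀ U : Submodule F (Fin n → F),
      0 ≤ ∑ S : Submodule F (Fin n → F),
        if S ≤ U then (Fintype.card S : ℝ) ^ ℓ * p S else 0) ∧
  (∀ U : Submodule F (Fin n → F),
      0 ≤ ∑ S : Submodule F (Fin n → F), if U ≤ S then p S else 0)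

/-!
The point mass on a code of dimension `k₀` is feasible, so the optimum is at least `q ^ k₀`.
Conversely, Möbius inversion on the subspace lattice gives a dual solution `c ≥ 0`, strictly
positive below dimension `k₀`, with `∑_{U ≥ S} c U · |S| ^ ℓ = q ^ k₀ - |S|` whenever
`dim S ≤ k₀`; pairing it with the constraints `∑_{S ≤ U} |S| ^ ℓ p S ≥ 0` shows that the
objective is at most `q ^ k₀`. At an optimum every such constraint with `dim U < k₀` is therefore
tight, which forces `p = 0` below dimension `k₀`, and at dimension `k₀` the constraint
`∑_{T ≥ S} p T ≥ 0` reduces to `p S ≥ 0`. Positivity of `c` is where `ℓ ≥ n` enters: a subspace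
of dimension `m` has fewer than `q ^ n` covers, while the weights decay by a factor `q ^ ℓ`.
-/

open Finset

section FiniteOrder

variable {α M : Type*} [PartialOrder α] [Fintype α]

lemma sum_filter_ge_eq_add_sum_filter_gt [AddCommMonoid M] (f : α → M) (x : α) :
    ∑ y with x ≤ y, f y = f x + ∑ y with x < y, f y := by
  rw [show univ.filter (x ≤ ·) = insert x (univ.filter (x < ·)) by
    ext y; simp [le_iff_eq_or_lt, eq_comm], sum_insert (by simp)]

lemma sum_filter_le_eq_add_sum_filter_lt [AddCommMonoid M] (f : α → M) (x : α) :
    ∑ y with y ≤ x, f y = f x + ∑ y with y < x, f y :=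
  sum_filter_ge_eq_add_sum_filter_gt (α := αᵒᵈ) f x

def upperMobius [AddCommGroup M] (g : α → M) : α → M :=
  WellFoundedGT.fix fun x rec =>
    g x - ∑ y ∈ (univ.filter (x < ·)).attach, rec y (mem_filter.1 y.2).2

lemma upperMobius_eq [AddCommGroup M] (g : α → M) (x : α) :
    upperMobius g x = g x - ∑ y with x < y, upperMobius g y := by
  rw [upperMobius, WellFoundedGT.fix_eq, sum_attach]

lemma sum_filter_ge_upperMobius [AddCommGroup M] (g : α → M) (x : α) :
    ∑ y with x ≤ y, upperMobius g y = g x := by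
  rw [sum_filter_ge_eq_add_sum_filter_gt, upperMobius_eq, sub_add_cancel]

lemma sum_mul_sum_filter_le_comm (c a : α → ℝ) :
    ∑ x, c x * ∑ y with y ≤ x, a y = ∑ y, a y * ∑ x with y ≤ x, c x := by
  simp_rw [sum_filter, mul_sum, mul_ite, mul_zero]
  rw [sum_comm]
  simp_rw [mul_comm]

lemma sum_filter_gt_le_sum_covBy (f : α → ℝ) (x : α) (hf : ∀ y, x < y → 0 ≤ f y) :
    ∑ y with x < y, f y ≤ ∑ z with x ⋖ z, ∑ y with z ≤ y, f y := by
  have : IsStronglyAtomic α := .of_wellFounded_lt wellFounded_lt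
  calc ∑ y with x < y, f y ≤ ∑ y with x < y, ∑ z with x ⋖ z ∧ z ≤ y, f y := by
        refine sum_le_sum fun y hy => ?_
        obtain ⟨z, hxz, hzy⟩ := exists_covBy_le_of_lt (mem_filter.1 hy).2
        exact single_le_sum (f := fun _ => f y) (fun _ _ => hf y (mem_filter.1 hy).2)
          (mem_filter.2 ⟨mem_univ z, hxz, hzy⟩)
    _ = ∑ z with x ⋖ z, ∑ y with z ≤ y, f y :=
        sum_comm' fun y z => by
          simp only [mem_filter, mem_univ, true_and]
          exact ⟨fun ⟨_, hxz, hzy⟩ => ⟨hzy, hxz⟩, fun ⟨hzy, hxz⟩ => ⟨hxz.lt.trans_le hzy, hxz, hzy⟩⟩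

lemma eq_zero_of_sum_filter_le_eq_zero [AddCommMonoid M] {f : α → M} {P : α → Prop}
    (hP : ∀ ⦃x y⦄, y ≤ x → P x → P y) (h : ∀ x, P x → ∑ y with y ≤ x, f y = 0) :
    ∀ x, P x → f x = 0 := by
  intro x
  induction x using WellFoundedLT.induction with
  | ind x ih =>
    intro hx
    have hrest : ∑ y with y < x, f y = 0 :=
      sum_eq_zero fun y hy => ih y (mem_filter.1 hy).2 (hP (mem_filter.1 hy).2.le hx)
    simpa [sum_filter_le_eq_add_sum_filter_lt, hrest] using h x hx

end FiniteOrder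

/-- Chosen so that `dualWeight q k ℓ m * (q ^ m) ^ ℓ = q ^ k - q ^ m` for `m ≤ k`. -/
def dualWeight (q k ℓ m : ℕ) : ℝ :=
  if m ≤ k then ((q : ℝ) ^ k - (q : ℝ) ^ m) / (q : ℝ) ^ (m * ℓ) else 0

section DualWeight

variable {q k ℓ m : ℕ}

lemma dualWeight_nonneg (hq : 1 ≤ q) : 0 ≤ dualWeight q k ℓ m := by
  unfold dualWeight
  split_ifs with hm
  · exact div_nonneg (sub_nonneg.2 (pow_le_pow_right₀ (by exact_mod_cast hq) hm)) (by positivity)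
  · rfl

lemma dualWeight_of_le (h : k ≤ m) : dualWeight q k ℓ m = 0 := by
  unfold dualWeight
  split_ifs with hm
  · rw [le_antisymm hm h, sub_self, zero_div]
  · rfl

lemma dualWeight_mul_pow_pow (hq : 0 < q) (hm : m ≤ k) :
    dualWeight q k ℓ m * ((q : ℝ) ^ m) ^ ℓ = (q : ℝ) ^ k - (q : ℝ) ^ m := by
  rw [dualWeight, if_pos hm, ← pow_mul, div_mul_cancel₀ _ (by positivity)]

lemma mul_dualWeight_succ_lt {N : ℕ} (hq : 1 < q) (hm : m < k) (hkN : k ≤ N) (hNℓ : N ≤ ℓ) :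
    ((q : ℝ) ^ N - (q : ℝ) ^ m) * dualWeight q k ℓ (m + 1) < dualWeight q k ℓ m := by
  have hq' : (1 : ℝ) < q := by exact_mod_cast hq
  have key : ((q : ℝ) ^ N - q ^ m) * (q ^ k - q ^ (m + 1)) < (q ^ k - q ^ m) * q ^ ℓ :=
    calc ((q : ℝ) ^ N - q ^ m) * (q ^ k - q ^ (m + 1))
        ≤ ((q : ℝ) ^ N - q ^ m) * (q ^ k - q ^ m) := by
          gcongr
          · exact sub_nonneg.2 (pow_le_pow_right₀ hq'.le (hm.le.trans hkN))
          · exact hq'.le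
          · omega
      _ < (q : ℝ) ^ ℓ * (q ^ k - q ^ m) := by
          gcongr
          · exact sub_pos.2 (pow_lt_pow_right₀ hq' hm)
          · linarith [pow_le_pow_right₀ hq'.le hNℓ, pow_pos (zero_lt_one.trans hq') m]
      _ = ((q : ℝ) ^ k - q ^ m) * q ^ ℓ := mul_comm _ _
  rw [dualWeight, dualWeight, if_pos (Nat.succ_le_of_lt hm), if_pos hm.le, mul_div_assoc',
    div_lt_div_iff₀ (by positivity) (by positivity)]
  calc _ < ((q : ℝ) ^ k - q ^ m) * q ^ ℓ * q ^ (m * ℓ) :=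
        mul_lt_mul_of_pos_right key (by positivity)
    _ = _ := by ring

end DualWeight

namespace Submodule

variable {K V : Type*} [DivisionRing K] [AddCommGroup V] [Module K V] {U W : Submodule K V}

lemma eq_sup_span_singleton_of_covBy (h : U ⋖ W) {x : V} (hxW : x ∈ W) (hxU : x ∉ U) :
    W = U ⊔ K ∙ x := by
  have hlt : U < U ⊔ K ∙ x :=
    lt_of_le_of_ne le_sup_left fun he => hxU (he ▸ mem_sup_right (mem_span_singleton_self x))
  exact ((h.eq_or_eq le_sup_left (sup_le h.le ((span_singleton_le_iff_mem x W).2 hxW))).resolve_left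
    hlt.ne').symm

lemma finrank_eq_succ_of_covBy [Module.Finite K V] (h : U ⋖ W) :
    Module.finrank K W = Module.finrank K U + 1 := by
  obtain ⟨x, hxW, hxU⟩ := SetLike.exists_of_lt h.lt
  rw [eq_sup_span_singleton_of_covBy h hxW hxU, finrank_sup_span_singleton hxU]

variable [Fintype V]

lemma card_filter_covBy_le (U : Submodule K V) :
    #{W | U ⋖ W} ≤ Fintype.card V - Fintype.card U := by
  calc #{W | U ⋖ W} ≤ #(univ.image fun x : {x // x ∉ U} => U ⊔ K ∙ (x : V)) := by
        refine card_le_card fun W hW => ?_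
        obtain ⟨x, hxW, hxU⟩ := SetLike.exists_of_lt (mem_filter.1 hW).2.lt
        exact mem_image.2 ⟨⟨x, hxU⟩, mem_univ _,
          (eq_sup_span_singleton_of_covBy (mem_filter.1 hW).2 hxW hxU).symm⟩
    _ ≤ Fintype.card {x // x ∉ U} := card_image_le
    _ = Fintype.card V - Fintype.card U := Fintype.card_subtype_compl _

end Submodule

section DualCertificate

variable (F V : Type*) [Field F] [Fintype F] [AddCommGroup V] [Module F V] [Fintype V]

omit [Fintype V] in
lemma cast_card_eq_pow_finrank (W : Type*) [AddCommGroup W] [Module F W] [Fintype W] :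
    (Fintype.card W : ℝ) = (Fintype.card F : ℝ) ^ Module.finrank F W := by
  exact_mod_cast Module.card_eq_pow_finrank (K := F) (V := W)

def dualCert (k ℓ : ℕ) : Submodule F V → ℝ :=
  upperMobius fun U => dualWeight (Fintype.card F) k ℓ (Module.finrank F U)

variable {F V} {k ℓ : ℕ}

lemma dualCert_eq_sub (U : Submodule F V) : dualCert F V k ℓ U =
    dualWeight (Fintype.card F) k ℓ (Module.finrank F U) - ∑ W with U < W, dualCert F V k ℓ W :=
  upperMobius_eq _ U

lemma sum_filter_ge_dualCert (U : Submodule F V) :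
    ∑ W with U ≤ W, dualCert F V k ℓ W = dualWeight (Fintype.card F) k ℓ (Module.finrank F U) :=
  sum_filter_ge_upperMobius _ U

/-- Below dimension `k`, the sum of `dualCert` over `W > U` is at most
`#{covers of U} · dualWeight (dim U + 1)`, and `U` has at most `q ^ N - q ^ (dim U)` covers. -/
lemma dualCert_eq_zero_and_pos (hkN : k ≤ Module.finrank F V) (hNℓ : Module.finrank F V ≤ ℓ)
    (U : Submodule F V) :
    (k ≤ Module.finrank F U → dualCert F V k ℓ U = 0) ∧
      (Module.finrank F U < k → 0 < dualCert F V k ℓ U) := by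
  induction U using WellFoundedGT.induction with
  | ind U ih =>
    have hnonneg : ∀ W, U < W → 0 ≤ dualCert F V k ℓ W := fun W hW =>
      (le_or_gt k (Module.finrank F W)).elim (fun h => ((ih W hW).1 h).ge)
        (fun h => ((ih W hW).2 h).le)
    refine ⟨fun hk => ?_, fun hm => ?_⟩
    · rw [dualCert_eq_sub, dualWeight_of_le hk, zero_sub, neg_eq_zero]
      exact sum_eq_zero fun W hW => (ih W (mem_filter.1 hW).2).1
        (hk.trans (Submodule.finrank_lt_finrank_of_lt (mem_filter.1 hW).2).le)
    have hcovers : ∑ W with U ⋖ W, ∑ W' with W ≤ W', dualCert F V k ℓ W'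
        = #{W | U ⋖ W} * dualWeight (Fintype.card F) k ℓ (Module.finrank F U + 1) := by
      rw [← nsmul_eq_mul, ← sum_const]
      refine sum_congr rfl fun W hW => ?_
      rw [sum_filter_ge_dualCert, Submodule.finrank_eq_succ_of_covBy (mem_filter.1 hW).2]
    have hcard : (#{W | U ⋖ W} : ℝ) ≤
        (Fintype.card F : ℝ) ^ Module.finrank F V - (Fintype.card F : ℝ) ^ Module.finrank F U := by
      rw [← cast_card_eq_pow_finrank F, ← cast_card_eq_pow_finrank F,
        ← Nat.cast_sub (Fintype.card_subtype_le _)]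
      exact_mod_cast Submodule.card_filter_covBy_le U
    have hstep := mul_dualWeight_succ_lt (ℓ := ℓ) (Fintype.one_lt_card (α := F)) hm hkN hNℓ
    have hupper := sum_filter_gt_le_sum_covBy (dualCert F V k ℓ) U fun W hW => hnonneg W hW
    have hmul := mul_le_mul_of_nonneg_right hcard <|
      dualWeight_nonneg (k := k) (ℓ := ℓ) (m := Module.finrank F U + 1) (Fintype.card_pos (α := F))
    rw [dualCert_eq_sub]
    linarith

lemma dualCert_nonneg (hkN : k ≤ Module.finrank F V) (hNℓ : Module.finrank F V ≤ ℓ)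
    (U : Submodule F V) : 0 ≤ dualCert F V k ℓ U :=
  (le_or_gt k (Module.finrank F U)).elim (fun h => ((dualCert_eq_zero_and_pos hkN hNℓ U).1 h).ge)
    (fun h => ((dualCert_eq_zero_and_pos hkN hNℓ U).2 h).le)

/-- Weak duality, with `dualCert` as the dual solution. -/
lemma sum_dualCert_mul_eq (p : Submodule F V → ℝ) (hp : ∑ S, p S = 1)
    (hpk : ∀ S : Submodule F V, k < Module.finrank F S → p S = 0) :
    ∑ U, dualCert F V k ℓ U * ∑ S with S ≤ U, (Fintype.card S : ℝ) ^ ℓ * p S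
      = (Fintype.card F : ℝ) ^ k - ∑ S : Submodule F V, (Fintype.card S : ℝ) * p S := by
  rw [sum_mul_sum_filter_le_comm, ← mul_one ((Fintype.card F : ℝ) ^ k), ← hp, mul_sum,
    ← sum_sub_distrib]
  refine sum_congr rfl fun S _ => ?_
  rw [sum_filter_ge_dualCert]
  rcases le_or_gt (Module.finrank F S) k with hS | hS
  · rw [cast_card_eq_pow_finrank F, mul_comm _ (dualWeight _ _ _ _), ← mul_assoc,
      dualWeight_mul_pow_pow Fintype.card_pos hS]
    ring
  · simp [hpk S hS]

/-- Complementary slackness: once the objective reaches `q ^ k`, the weak-duality sum of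
nonnegative terms vanishes. -/
lemma sum_filter_le_eq_zero_of_le_objective (hkN : k ≤ Module.finrank F V)
    (hNℓ : Module.finrank F V ≤ ℓ) (p : Submodule F V → ℝ) (hp : ∑ S, p S = 1)
    (hpk : ∀ S : Submodule F V, k < Module.finrank F S → p S = 0)
    (hdown : ∀ U : Submodule F V, 0 ≤ ∑ S with S ≤ U, (Fintype.card S : ℝ) ^ ℓ * p S)
    (hobj : (Fintype.card F : ℝ) ^ k ≤ ∑ S : Submodule F V, (Fintype.card S : ℝ) * p S)
    (U : Submodule F V) (hU : Module.finrank F U < k) :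
    ∑ S with S ≤ U, (Fintype.card S : ℝ) ^ ℓ * p S = 0 := by
  have hterms : ∀ U ∈ (univ : Finset (Submodule F V)),
      0 ≤ dualCert F V k ℓ U * ∑ S with S ≤ U, (Fintype.card S : ℝ) ^ ℓ * p S :=
    fun U _ => mul_nonneg (dualCert_nonneg hkN hNℓ U) (hdown U)
  have hgap : ∑ U, dualCert F V k ℓ U * ∑ S with S ≤ U, (Fintype.card S : ℝ) ^ ℓ * p S = 0 :=
    le_antisymm (by rw [sum_dualCert_mul_eq p hp hpk]; linarith) (sum_nonneg hterms)
  exact (mul_eq_zero.1 ((sum_eq_zero_iff_of_nonneg hterms).1 hgap U (mem_univ U))).resolve_left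
    ((dualCert_eq_zero_and_pos hkN hNℓ U).2 hU).ne'

omit [Fintype F] in
lemma eq_zero_of_sum_filter_le_pow_mul_eq_zero {p : Submodule F V → ℝ}
    (h : ∀ U : Submodule F V, Module.finrank F U < k →
      ∑ S with S ≤ U, (Fintype.card S : ℝ) ^ ℓ * p S = 0)
    (S : Submodule F V) (hS : Module.finrank F S < k) : p S = 0 :=
  (mul_eq_zero.1 (eq_zero_of_sum_filter_le_eq_zero (fun _ _ hSU hU =>
    (Submodule.finrank_mono hSU).trans_lt hU) h S hS)).resolve_left (by positivity)

end DualCertificate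

lemma exists_minDistGe_finrank_eq_kzero (n d : ℕ) (F : Type) [Field F] [Fintype F] :
    ∃ C : Submodule F (Fin n → F), MinDistGe n d F C ∧ Module.finrank F C = kzero n d F := by
  unfold kzero
  exact Nat.sSup_mem
    (s := {k | ∃ C : Submodule F (Fin n → F), MinDistGe n d F C ∧ Module.finrank F C = k})
    ⟨0, ⊥, fun w hw hw0 => absurd ((Submodule.mem_bot F).1 hw) hw0, finrank_bot F _⟩
    ⟨n, fun _ ⟨C, _, hC⟩ => hC ▸ (Submodule.finrank_le C).trans_eq (Module.finrank_fin_fun F)⟩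

lemma pseudoFeasibleDim_indicator {n ℓ d : ℕ} {F : Type} [Field F] [Fintype F]
    {C : Submodule F (Fin n → F)} (hC : Module.finrank F C ≤ kzero n d F) :
    PseudoFeasibleDim n ℓ d F fun S => if S = C then 1 else 0 := by
  refine ⟨by simp, fun S hS => if_neg fun h => (h ▸ hC).not_gt hS, fun U => ?_, fun U => ?_⟩ <;>
    exact sum_nonneg fun S _ => by split_ifs <;> positivity

theorem partial_optimum_solutions_integral_general
    (n ℓ d : ℕ) (hnl : n ≤ ℓ)
    (F : Type) [Field F] [Fintype F]
    (p : Submodule F (Fin n → F) → ℝ)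
    (hfeas : PseudoFeasibleDim n ℓ d F p)
    (hopt : ∀ p' : Submodule F (Fin n → F) → ℝ, PseudoFeasibleDim n ℓ d F p' →
      (∑ S : Submodule F (Fin n → F), (Fintype.card S : ℝ) * p' S)
        ≤ ∑ S : Submodule F (Fin n → F), (Fintype.card S : ℝ) * p S) :
    (∀ S : Submodule F (Fin n → F), 0 ≤ p S) ∧
    (∑ S : Submodule F (Fin n → F), p S) = 1 ∧
    (∀ S : Submodule F (Fin n → F), Module.finrank F S ≠ kzero n d F → p S = 0) := by
  obtain ⟨hsum, hhigh, hdown, hup⟩ := hfeas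
  simp only [← sum_filter] at hdown hup
  obtain ⟨C, -, hC⟩ := exists_minDistGe_finrank_eq_kzero n d F
  have hkN : kzero n d F ≤ Module.finrank F (Fin n → F) := hC ▸ Submodule.finrank_le C
  have hNℓ : Module.finrank F (Fin n → F) ≤ ℓ := (Module.finrank_fin_fun F).trans_le hnl
  have hobj : (Fintype.card F : ℝ) ^ kzero n d F ≤
      ∑ S : Submodule F (Fin n → F), (Fintype.card S : ℝ) * p S :=
    calc (Fintype.card F : ℝ) ^ kzero n d F = Fintype.card C := by
          rw [cast_card_eq_pow_finrank F C, hC]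
      _ = ∑ S : Submodule F (Fin n → F), (Fintype.card S : ℝ) * if S = C then 1 else 0 := by simp
      _ ≤ _ := hopt _ (pseudoFeasibleDim_indicator hC.le)
  have hlow := eq_zero_of_sum_filter_le_pow_mul_eq_zero
    (sum_filter_le_eq_zero_of_le_objective hkN hNℓ p hsum hhigh hdown hobj)
  have hne : ∀ S : Submodule F (Fin n → F), Module.finrank F S ≠ kzero n d F → p S = 0 :=
    fun S hS => hS.lt_or_gt.elim (hlow S) (hhigh S)
  refine ⟨fun S => ?_, hsum, hne⟩
  by_cases hS : Module.finrank F S = kzero n d F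
  · have hS_up := hup S
    rwa [sum_filter_ge_eq_add_sum_filter_gt, sum_eq_zero fun T hT =>
      hhigh T (hS ▸ Submodule.finrank_lt_finrank_of_lt (mem_filter.1 hT).2), add_zero] at hS_up
  · exact (hne S hS).ge

/-- **Structure of optima for the partial Krawtchouk objective (Theorem 4.4,
structure of optima).** For `ℓ ≥ n`, any maximizer of `∑_S |S| p S` over the
dimension-constrained pseudoprobability program is a probability distribution
supported on subspaces of dimension exactly `k₀`. -/
theorem partial_optimum_solutions_integral
    (n ℓ d : ℕ) (hn : 1 ≤ n) (hd : 1 ≤ d) (hdn : d ≤ n) (hnl : n ≤ ℓ)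
    (F : Type) [Field F] [Fintype F]
    (p : Submodule F (Fin n → F) → ℝ)
    (hfeas : PseudoFeasibleDim n ℓ d F p)
    (hopt : ∀ p' : Submodule F (Fin n → F) → ℝ, PseudoFeasibleDim n ℓ d F p' →
      (∑ S : Submodule F (Fin n → F), (Fintype.card S : ℝ) * p' S)
        ≤ ∑ S : Submodule F (Fin n → F), (Fintype.card S : ℝ) * p S) :
    (∀ S : Submodule F (Fin n → F), 0 ≤ p S) ∧
    (∑ S : Submodule F (Fin n → F), p S) = 1 ∧
    (∀ S : Submodule F (Fin n → F), Module.finrank F S ≠ kzero n d F → p S = 0) :=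
  partial_optimum_solutions_integral_general n ℓ d hnl F p hfeas hopt
end
end
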